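/- For 0 < r₁, r₂ < 1 with r₁ ≠ r₂, define γ_±(r₁,r₂) = (2r₁r₂/(r₁ ± r₂)) · (ln((1+r₁)/(1−r₁)) ± ln((1+r₂)/(1−r₂))) / (ln((1+r₁)/(1−r₁)) · ln((1+r₂)/(1−r₂))). Then γ₊(r₁,r₂) ≠ γ₋(r₁,r₂). -/

import Mathlib

noncomputable def gammaP (r1 r2 : ℝ) : ℝ :=
  (2 * r1 * r2 / (r1 + r2)) *
    (Real.log ((1 + r1) / (1 - r1)) + Real.log ((1 + r2) / (1 - r2))) /
    (Real.log ((1 + r1) / (1 - r1)) * Real.log ((1 + r2) / (1 - r2)))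

noncomputable def gammaM (r1 r2 : ℝ) : ℝ :=
  (2 * r1 * r2 / (r1 - r2)) *
    (Real.log ((1 + r1) / (1 - r1)) - Real.log ((1 + r2) / (1 - r2))) /
    (Real.log ((1 + r1) / (1 - r1)) * Real.log ((1 + r2) / (1 - r2)))

/-! With `L r = log ((1 + r) / (1 - r)) = 2 artanh r`, clearing denominators turns
`γ₊ = γ₋` into `L r₁ / r₁ = L r₂ / r₂`. By the Taylor series of `artanh`,
`L r / r = ∑ 2 r ^ (2k) / (2k + 1)`, which is strictly increasing on `(0, 1)`. -/

open Real Set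

theorem hasSum_log_one_add_div_one_sub_div {x : ℝ} (hx : |x| < 1) (hx0 : x ≠ 0) :
    HasSum (fun k : ℕ => 2 / (2 * k + 1) * x ^ (2 * k))
      (log ((1 + x) / (1 - x)) / x) := by
  obtain ⟨hlo, hhi⟩ := abs_lt.1 hx
  rw [log_div (by linarith) (by linarith)]
  refine ((hasSum_log_sub_log_of_abs_lt_one hx).div_const x).congr_fun fun k => ?_
  rw [pow_succ]
  field_simp

theorem strictMonoOn_log_one_add_div_one_sub_div :
    StrictMonoOn (fun r : ℝ => log ((1 + r) / (1 - r)) / r) (Ioo 0 1) := by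
  intro a ⟨ha0, ha1⟩ b ⟨hb0, hb1⟩ hab
  have habs {r : ℝ} (h0 : 0 < r) (h1 : r < 1) : |r| < 1 := by rw [abs_of_pos h0]; exact h1
  refine hasSum_lt (i := 1) (fun k => ?_) ?_
    (hasSum_log_one_add_div_one_sub_div (habs ha0 ha1) ha0.ne')
    (hasSum_log_one_add_div_one_sub_div (habs hb0 hb1) hb0.ne')
  · gcongr
  · norm_num
    gcongr

theorem log_one_add_div_one_sub_pos {r : ℝ} (hr : r ∈ Ioo (0 : ℝ) 1) :
    0 < log ((1 + r) / (1 - r)) :=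
  log_pos <| (one_lt_div (by linarith [hr.2])).2 (by linarith [hr.1])

theorem gammaP_eq_gammaM_iff {r1 r2 : ℝ} (h1 : 0 < r1) (h2 : 0 < r2) (hne : r1 ≠ r2)
    (hL1 : log ((1 + r1) / (1 - r1)) ≠ 0) (hL2 : log ((1 + r2) / (1 - r2)) ≠ 0) :
    gammaP r1 r2 = gammaM r1 r2 ↔
      log ((1 + r1) / (1 - r1)) / r1 = log ((1 + r2) / (1 - r2)) / r2 := by
  have hsub : r1 - r2 ≠ 0 := sub_ne_zero.2 hne
  rw [gammaP, gammaM, div_eq_div_iff h1.ne' h2.ne']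
  field_simp
  constructor <;> intro h
  · linear_combination -h / 2
  · linear_combination -2 * h

theorem gammaP_ne_gammaM (r1 r2 : ℝ) (h1 : r1 ∈ Set.Ioo (0:ℝ) 1)
    (h2 : r2 ∈ Set.Ioo (0:ℝ) 1) (hne : r1 ≠ r2) :
    gammaP r1 r2 ≠ gammaM r1 r2 := by
  rw [Ne, gammaP_eq_gammaM_iff h1.1 h2.1 hne (log_one_add_div_one_sub_pos h1).ne'
    (log_one_add_div_one_sub_pos h2).ne']
  exact strictMonoOn_log_one_add_div_one_sub_div.injOn.ne h1 h2 hne
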